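/- arXiv:gr-qc/9905061 — 5 statements merged into one kernel-verified Lean document; each statement's English description precedes it below -/
import Mathlib

section
/- Let v, τ ∈ ℝ and let ζ : ℝ → ℝ be 2π-periodic. Define ψ : ℝ × ℝ → ℝ by ψ(θ, t) = ζ(θ − v t) + ζ(θ + v t − 2 v τ + π). Then ψ is 2π-periodic in its first argument and satisfies the antipodal time-reversal gluing condition at time τ, i.e. ψ(θ, τ + s) = ψ(θ + π, τ − s) for all θ, s ∈ ℝ. Moreover, if ζ is twice continuously differentiable, then ψ satisfies the one-dimensional wave equation ∂²ψ/∂t² = v² ∂²ψ/∂θ². -/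
/-! ψ is the superposition of the right-moving wave ζ(θ − v t) and the left-moving wave
ζ(θ + v t − 2vτ + π). Shifting θ by π and reflecting t about τ exchanges the two waves, up to a
shift of the argument by 2π, which gives the gluing condition; d'Alembert's computation gives the
wave equation. -/

open Real

section TravellingWaves

variable {𝕜 F : Type*} [NontriviallyNormedField 𝕜] [NormedAddCommGroup F] [NormedSpace 𝕜 F]

theorem iteratedDeriv_comp_const_add_mul {n : ℕ} {f : 𝕜 → F} (hf : ContDiff 𝕜 n f) (a b x : 𝕜) :
    iteratedDeriv n (fun y => f (b + a * y)) x = a ^ n • iteratedDeriv n f (b + a * x) := by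
  rw [iteratedDeriv_comp_const_smul (f := fun z => f (b + z))
    (hf.comp (contDiff_const.add contDiff_id)) a, iteratedDeriv_comp_const_add]

theorem deriv_deriv_eq_iteratedDeriv_two (f : 𝕜 → F) : deriv (deriv f) = iteratedDeriv 2 f := by
  rw [iteratedDeriv_eq_iterate]
  rfl

theorem wave_equation_of_travelling_waves {f g : 𝕜 → F} (hf : ContDiff 𝕜 2 f)
    (hg : ContDiff 𝕜 2 g) (v θ t : 𝕜) :
    deriv (deriv fun t' => f (θ - v * t') + g (θ + v * t')) t =
      v ^ 2 • deriv (deriv fun θ' => f (θ' - v * t) + g (θ' + v * t)) θ := by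
  have time : deriv (deriv fun t' => f (θ - v * t') + g (θ + v * t')) t =
      v ^ 2 • iteratedDeriv 2 f (θ - v * t) + v ^ 2 • iteratedDeriv 2 g (θ + v * t) := by
    have hf_affine : ContDiff 𝕜 2 fun y => f (θ + -v * y) :=
      hf.comp (contDiff_const.add (contDiff_const.mul contDiff_id))
    have hg_affine : ContDiff 𝕜 2 fun y => g (θ + v * y) :=
      hg.comp (contDiff_const.add (contDiff_const.mul contDiff_id))
    simp only [sub_eq_add_neg, ← neg_mul]
    rw [deriv_deriv_eq_iteratedDeriv_two,
      iteratedDeriv_fun_add hf_affine.contDiffAt hg_affine.contDiffAt,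
      iteratedDeriv_comp_const_add_mul hf, iteratedDeriv_comp_const_add_mul hg, neg_sq]
  have space : deriv (deriv fun θ' => f (θ' - v * t) + g (θ' + v * t)) θ =
      iteratedDeriv 2 f (θ - v * t) + iteratedDeriv 2 g (θ + v * t) := by
    have hf_shift : ContDiff 𝕜 2 fun y => f (y - v * t) := hf.comp (contDiff_id.sub contDiff_const)
    have hg_shift : ContDiff 𝕜 2 fun y => g (y + v * t) := hg.comp (contDiff_id.add contDiff_const)
    rw [deriv_deriv_eq_iteratedDeriv_two,
      iteratedDeriv_fun_add hf_shift.contDiffAt hg_shift.contDiffAt,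
      iteratedDeriv_comp_sub_const, iteratedDeriv_comp_add_const]
  rw [time, space, smul_add]

end TravellingWaves

/-- for 2π-periodic `ζ`, the function
`ψ(θ, t) = ζ(θ − v t) + ζ(θ + v t − 2 v τ + π)` is 2π-periodic in `θ`,
satisfies the antipodal time-reversal gluing condition at time `τ`, and,
if `ζ` is C², satisfies the 1D wave equation `∂²ψ/∂t² = v² ∂²ψ/∂θ²`. -/
theorem stmt0 (v τ : ℝ) (ζ : ℝ → ℝ) (hζper : ∀ x, ζ (x + 2 * π) = ζ x)
    (ψ : ℝ → ℝ → ℝ)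
    (hψ : ∀ θ t, ψ θ t = ζ (θ - v * t) + ζ (θ + v * t - 2 * v * τ + π)) :
    (∀ θ t, ψ (θ + 2 * π) t = ψ θ t) ∧
    (∀ θ s, ψ θ (τ + s) = ψ (θ + π) (τ - s)) ∧
    (ContDiff ℝ 2 ζ →
      ∀ θ t,
        deriv (fun t' => deriv (fun t'' => ψ θ t'') t') t =
          v ^ 2 * deriv (fun θ' => deriv (fun θ'' => ψ θ'' t) θ') θ) := by
  have hper : Function.Periodic ζ (2 * π) := hζper
  refine ⟨fun θ t => ?_, fun θ s => ?_, fun hζ θ t => ?_⟩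
  · rw [hψ, hψ]
    exact congrArg₂ (· + ·) (hper.sub_const (v * t) θ)
      (((hper.add_const π).sub_const (2 * v * τ)).add_const (v * t) θ)
  · rw [hψ, hψ, add_comm,
      show θ + π + v * (τ - s) - 2 * v * τ + π = θ - v * (τ + s) + 2 * π by ring, hζper,
      show θ + π - v * (τ - s) = θ + v * (τ + s) - 2 * v * τ + π by ring]
  · simp only [hψ]
    exact wave_equation_of_travelling_waves (g := fun x => ζ (x - 2 * v * τ + π)) hζ
      (hζ.comp ((contDiff_id.sub contDiff_const).add contDiff_const)) v θ t
end

section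
/- Let v, τ ∈ ℝ with v ≠ 0, let ζ, φ : ℝ → ℝ, and define ψ(θ, t) = ζ(θ − v t) + φ(θ + v t). If ψ satisfies the antipodal time-reversal gluing condition at time τ (ψ(θ, τ + s) = ψ(θ + π, τ − s) for all θ, s ∈ ℝ), then there exists a constant c ∈ ℝ such that φ(x) = ζ(x − 2 v τ + π) − c for all x ∈ ℝ, and consequently ψ(θ, t) = ζ(θ − v t) + ζ(θ + v t − 2 v τ + π) − c for all θ, t ∈ ℝ. In particular the backward-moving profile φ, and hence the initial data of ψ, cannot be specified independently of the value of τ at which the topology change occurs. -/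
open Real

/-! In the characteristic coordinates `a = θ - v t`, `b = θ + v t`, which cover the plane because
`v ≠ 0`, the gluing condition reads `ζ a + φ b = ζ (b - 2 v τ + π) + φ (a + 2 v τ + π)`.
The variables separate, so `φ b - ζ (b - 2 v τ + π)` does not depend on `b`. -/

lemma exists_sub_mul_eq_and_add_mul_eq {v : ℝ} (hv : v ≠ 0) (a b : ℝ) :
    ∃ θ t, θ - v * t = a ∧ θ + v * t = b :=
  ⟨(a + b) / 2, (b - a) / (2 * v), by field_simp; ring, by field_simp; ring⟩

lemma exists_eq_sub_of_add_eq_add {α G : Type*} [AddCommGroup G] [Nonempty α]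
    {f g h k : α → G} (H : ∀ a b, f a + g b = h b + k a) :
    ∃ c, ∀ b, g b = h b - c := by
  obtain ⟨a₀⟩ := ‹Nonempty α›
  refine ⟨f a₀ - k a₀, fun b => ?_⟩
  rw [eq_sub_iff_add_eq, ← add_left_inj (k a₀), ← H a₀ b]
  abel

lemma dAlembert_add_eq_add_of_antipodal_gluing {v τ : ℝ} (hv : v ≠ 0) {ζ φ : ℝ → ℝ}
    {ψ : ℝ → ℝ → ℝ} (hψ : ∀ θ t, ψ θ t = ζ (θ - v * t) + φ (θ + v * t))
    (hglue : ∀ θ s, ψ θ (τ + s) = ψ (θ + π) (τ - s)) (a b : ℝ) :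
    ζ a + φ b = ζ (b - 2 * v * τ + π) + φ (a + 2 * v * τ + π) := by
  obtain ⟨θ, t, rfl, rfl⟩ := exists_sub_mul_eq_and_add_mul_eq hv a b
  have h := hglue θ (t - τ)
  rw [hψ, hψ, add_sub_cancel] at h
  convert h using 3 <;> ring

/-- if a d'Alembert-form solution `ψ(θ, t) = ζ(θ − v t) + φ(θ + v t)`
satisfies the antipodal time-reversal gluing condition at time `τ`, then for some
constant `c`, `φ(x) = ζ(x − 2 v τ + π) − c` for all `x`, and consequently
`ψ(θ, t) = ζ(θ − v t) + ζ(θ + v t − 2 v τ + π) − c` for all `θ, t`. -/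
theorem stmt2 (v τ : ℝ) (hv : v ≠ 0) (ζ φ : ℝ → ℝ) (ψ : ℝ → ℝ → ℝ)
    (hψ : ∀ θ t, ψ θ t = ζ (θ - v * t) + φ (θ + v * t))
    (hglue : ∀ θ s, ψ θ (τ + s) = ψ (θ + π) (τ - s)) :
    ∃ c : ℝ, (∀ x, φ x = ζ (x - 2 * v * τ + π) - c) ∧
      (∀ θ t, ψ θ t = ζ (θ - v * t) + ζ (θ + v * t - 2 * v * τ + π) - c) := by
  obtain ⟨c, hc⟩ := exists_eq_sub_of_add_eq_add
    (dAlembert_add_eq_add_of_antipodal_gluing hv hψ hglue)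
  refine ⟨c, hc, fun θ t => ?_⟩
  rw [hψ, hc]
  ring
end

section
/- Let v, τ ∈ ℝ with v ≠ 0 and let ψ : ℝ × ℝ → ℝ be twice continuously differentiable, satisfying the one-dimensional wave equation ∂²ψ/∂t²(θ, t) = v² ∂²ψ/∂θ²(θ, t) for all θ, t ∈ ℝ, and satisfying the antipodal time-reversal gluing condition at time τ (ψ(θ, τ + s) = ψ(θ + π, τ − s) for all θ, s ∈ ℝ). Then there exists a twice continuously differentiable function ζ : ℝ → ℝ such that ψ(θ, t) = ζ(θ − v t) + ζ(θ + v t − 2 v τ + π) for all θ, t ∈ ℝ. -/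
/-!
Along the characteristic directions `(v, ±1)` the mixed second derivative of `ψ` vanishes
(symmetry of the Hessian cancels the cross terms, the wave equation the diagonal ones), so `ψ`
splits as `ψ(θ, t) = F(θ - v t) + G(θ + v t)`. Reading the gluing condition on the line where
the `F`-argument on the left is `0` expresses `G` through `F`:
`G y = F (y - 2 v τ + π) + c`, and `ζ = F + c / 2` works.
-/

open Real Function

section LineDerivatives

variable {E G : Type*} [NormedAddCommGroup E] [NormedSpace ℝ E]
  [NormedAddCommGroup G] [NormedSpace ℝ G] {f : E → G}

theorem hasDerivAt_add_smul (x w : E) (s : ℝ) : HasDerivAt (fun s : ℝ => x + s • w) w s := by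
  simpa using ((hasDerivAt_id s).smul_const w).const_add x

theorem hasDerivAt_comp_add_smul (hf : Differentiable ℝ f) (x w : E) (s : ℝ) :
    HasDerivAt (fun s : ℝ => f (x + s • w)) (fderiv ℝ f (x + s • w) w) s :=
  (hf _).hasFDerivAt.comp_hasDerivAt s (hasDerivAt_add_smul x w s)

theorem hasDerivAt_fderiv_apply_comp_add_smul (hf' : Differentiable ℝ (fderiv ℝ f))
    (x w u : E) (s : ℝ) :
    HasDerivAt (fun s : ℝ => fderiv ℝ f (x + s • w) u)
      (fderiv ℝ (fderiv ℝ f) (x + s • w) w u) s :=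
  (ContinuousLinearMap.apply ℝ G u).hasFDerivAt.comp_hasDerivAt s
    ((hf' _).hasFDerivAt.comp_hasDerivAt s (hasDerivAt_add_smul x w s))

theorem deriv_deriv_comp_add_smul (hf : Differentiable ℝ f)
    (hf' : Differentiable ℝ (fderiv ℝ f)) (x w : E) (s : ℝ) :
    deriv (fun s => deriv (fun s' : ℝ => f (x + s' • w)) s) s =
      fderiv ℝ (fderiv ℝ f) (x + s • w) w w := by
  simp only [fun s => (hasDerivAt_comp_add_smul hf x w s).deriv]
  exact (hasDerivAt_fderiv_apply_comp_add_smul hf' x w w s).deriv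

theorem apply_add_smul_add_smul_of_fderiv_fderiv_eq_zero (hf : Differentiable ℝ f)
    (hf' : Differentiable ℝ (fderiv ℝ f)) {u w : E}
    (h : ∀ p, fderiv ℝ (fderiv ℝ f) p w u = 0) (p : E) (a b : ℝ) :
    f (p + a • u + b • w) = f (p + a • u) + f (p + b • w) - f p := by
  have hconst : ∀ x, fderiv ℝ f (x + b • w) u = fderiv ℝ f x u := by
    intro x
    have hd := fun s => hasDerivAt_fderiv_apply_comp_add_smul hf' x w u s
    simpa using is_const_of_deriv_eq_zero (fun s => (hd s).differentiableAt)
      (fun s => (hd s).deriv.trans (h _)) b 0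
  have hd : ∀ a : ℝ, HasDerivAt (fun a : ℝ => f (p + b • w + a • u) - f (p + a • u)) 0 a := by
    intro a
    have h1 := hasDerivAt_comp_add_smul hf (p + b • w) u a
    rw [add_right_comm p, hconst] at h1
    simpa only [sub_self] using h1.fun_sub (hasDerivAt_comp_add_smul hf p u a)
  have := is_const_of_deriv_eq_zero (fun a => (hd a).differentiableAt)
    (fun a => (hd a).deriv) a 0
  simp only [zero_smul, add_zero] at this
  rw [add_right_comm, ← sub_add_cancel (f (p + b • w + a • u)) (f (p + a • u)), this]
  abel

end LineDerivatives

section Wave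

variable {G : Type*} [NormedAddCommGroup G] [NormedSpace ℝ G] {ψ : ℝ → ℝ → G}

theorem deriv_deriv_eq_fderiv_fderiv_snd (h1 : Differentiable ℝ (uncurry ψ))
    (h2 : Differentiable ℝ (fderiv ℝ (uncurry ψ))) (θ t : ℝ) :
    deriv (fun t' => deriv (fun t'' => ψ θ t'') t') t =
      fderiv ℝ (fderiv ℝ (uncurry ψ)) (θ, t) (0, 1) (0, 1) := by
  simpa using deriv_deriv_comp_add_smul h1 h2 (θ, 0) (0, 1) t

theorem deriv_deriv_eq_fderiv_fderiv_fst (h1 : Differentiable ℝ (uncurry ψ))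
    (h2 : Differentiable ℝ (fderiv ℝ (uncurry ψ))) (θ t : ℝ) :
    deriv (fun θ' => deriv (fun θ'' => ψ θ'' t) θ') θ =
      fderiv ℝ (fderiv ℝ (uncurry ψ)) (θ, t) (1, 0) (1, 0) := by
  simpa using deriv_deriv_comp_add_smul h1 h2 (0, t) (1, 0) θ

end Wave

theorem fderiv_fderiv_characteristic_eq_zero {Ψ : ℝ × ℝ → ℝ} (h1 : Differentiable ℝ Ψ)
    (h2 : Differentiable ℝ (fderiv ℝ Ψ)) {v : ℝ} {p : ℝ × ℝ}
    (hwave : fderiv ℝ (fderiv ℝ Ψ) p (0, 1) (0, 1) =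
      v ^ 2 * fderiv ℝ (fderiv ℝ Ψ) p (1, 0) (1, 0)) :
    fderiv ℝ (fderiv ℝ Ψ) p (v, 1) (v, -1) = 0 := by
  have hsymm := second_derivative_symmetric (fun q => (h1 q).hasFDerivAt) (h2 p).hasFDerivAt
    (1, 0) (0, 1)
  have hdecomp : ∀ c : ℝ, ((v, c) : ℝ × ℝ) = v • (1, 0) + c • (0, 1) := fun c => by simp
  rw [hdecomp, hdecomp]
  simp only [map_add, map_smul, add_apply, smul_apply, smul_eq_mul, hsymm, hwave]
  ring

theorem exists_eq_add_of_wave {ψ : ℝ → ℝ → ℝ} {v : ℝ} (hv : v ≠ 0)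
    (hC2 : ContDiff ℝ 2 (uncurry ψ))
    (hwave : ∀ θ t, deriv (fun t' => deriv (fun t'' => ψ θ t'') t') t =
      v ^ 2 * deriv (fun θ' => deriv (fun θ'' => ψ θ'' t) θ') θ) :
    ∃ F G : ℝ → ℝ, ContDiff ℝ 2 F ∧ ContDiff ℝ 2 G ∧
      ∀ θ t, ψ θ t = F (θ - v * t) + G (θ + v * t) := by
  have h1 : Differentiable ℝ (uncurry ψ) := hC2.differentiable (by norm_num)
  have h2 : Differentiable ℝ (fderiv ℝ (uncurry ψ)) :=
    (hC2.fderiv_right (by norm_num)).differentiable one_ne_zero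
  have hchar : ∀ p, fderiv ℝ (fderiv ℝ (uncurry ψ)) p (v, 1) (v, -1) = 0 := by
    rintro ⟨θ, t⟩
    refine fderiv_fderiv_characteristic_eq_zero h1 h2 ?_
    rw [← deriv_deriv_eq_fderiv_fderiv_snd h1 h2, ← deriv_deriv_eq_fderiv_fderiv_fst h1 h2]
    exact hwave θ t
  refine ⟨fun x => uncurry ψ ((x / (2 * v)) • (v, -1)),
    fun y => uncurry ψ ((y / (2 * v)) • (v, 1)) - uncurry ψ 0, ?_, ?_, fun θ t => ?_⟩
  · exact hC2.comp ((contDiff_id.div_const _).smul contDiff_const)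
  · exact (hC2.comp ((contDiff_id.div_const _).smul contDiff_const)).sub contDiff_const
  · have hsplit := apply_add_smul_add_smul_of_fderiv_fderiv_eq_zero h1 h2 hchar 0
      ((θ - v * t) / (2 * v)) ((θ + v * t) / (2 * v))
    have hθt : (0 : ℝ × ℝ) + ((θ - v * t) / (2 * v)) • (v, -1) + ((θ + v * t) / (2 * v)) • (v, 1)
        = (θ, t) := by
      ext <;> simp only [Prod.smul_mk, smul_eq_mul, mul_neg, mul_one, zero_add, Prod.mk_add_mk] <;>
        field_simp <;> ring
    rw [hθt, zero_add, zero_add] at hsplit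
    rw [show ψ θ t = uncurry ψ (θ, t) from rfl, hsplit]
    exact add_sub_assoc _ _ _

theorem eq_of_antipodal_gluing {ψ : ℝ → ℝ → ℝ} {v τ : ℝ} (hv : v ≠ 0) {F G : ℝ → ℝ}
    (hrep : ∀ θ t, ψ θ t = F (θ - v * t) + G (θ + v * t))
    (hglue : ∀ θ s, ψ θ (τ + s) = ψ (θ + π) (τ - s)) (y : ℝ) :
    G y = F (y - 2 * v * τ + π) + (G (2 * v * τ + π) - F 0) := by
  have h := hglue (y / 2) ((y - 2 * v * τ) / (2 * v))
  rw [hrep, hrep] at h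
  have e1 : y / 2 - v * (τ + (y - 2 * v * τ) / (2 * v)) = 0 := by field_simp; ring
  have e2 : y / 2 + v * (τ + (y - 2 * v * τ) / (2 * v)) = y := by field_simp; ring
  have e3 : y / 2 + π - v * (τ - (y - 2 * v * τ) / (2 * v)) = y - 2 * v * τ + π := by
    field_simp; ring
  have e4 : y / 2 + π + v * (τ - (y - 2 * v * τ) / (2 * v)) = 2 * v * τ + π := by
    field_simp; ring
  rw [e1, e2, e3, e4] at h
  linear_combination h

/-- if a C² function `ψ` satisfies the one-dimensional wave
equation `∂²ψ/∂t² = v² ∂²ψ/∂θ²` (with `v ≠ 0`) and the antipodal time-reversal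
gluing condition at time `τ`, then there is a C² function `ζ` with
`ψ(θ, t) = ζ(θ − v t) + ζ(θ + v t − 2 v τ + π)` for all `θ, t`. -/
theorem stmt3 (v τ : ℝ) (hv : v ≠ 0) (ψ : ℝ → ℝ → ℝ)
    (hC2 : ContDiff ℝ 2 (fun p : ℝ × ℝ => ψ p.1 p.2))
    (hwave : ∀ θ t,
      deriv (fun t' => deriv (fun t'' => ψ θ t'') t') t =
        v ^ 2 * deriv (fun θ' => deriv (fun θ'' => ψ θ'' t) θ') θ)
    (hglue : ∀ θ s, ψ θ (τ + s) = ψ (θ + π) (τ - s)) :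
    ∃ ζ : ℝ → ℝ, ContDiff ℝ 2 ζ ∧
      ∀ θ t, ψ θ t = ζ (θ - v * t) + ζ (θ + v * t - 2 * v * τ + π) := by
  obtain ⟨F, G, hF, -, hrep⟩ := exists_eq_add_of_wave hv hC2 hwave
  refine ⟨fun x => F x + (G (2 * v * τ + π) - F 0) / 2, hF.add contDiff_const, fun θ t => ?_⟩
  rw [hrep, eq_of_antipodal_gluing hv hrep hglue]
  ring
end

section
/- Let v, τ₁, τ₂ ∈ ℝ with v ≠ 0, let ζ, φ : ℝ → ℝ, and define ψ(θ, t) = ζ(θ − v t) + φ(θ + v t). Suppose ψ satisfies the antipodal time-reversal gluing condition both at time τ₁ and at time τ₂ (i.e. ψ(θ, τᵢ + s) = ψ(θ + π, τᵢ − s) for all θ, s ∈ ℝ and i = 1, 2). Then there exists a constant c ∈ ℝ such that ζ(x + 2 v (τ₂ − τ₁)) = ζ(x) + c for all x ∈ ℝ; moreover, if ζ is bounded then c = 0, so that ζ is periodic with period 2 v (τ₂ − τ₁). In particular, topology changes (measurements) at two different times τ₁ ≠ τ₂ impose incompatible boundary conditions unless the profile ζ has the special period 2 v (τ₂ − τ₁).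 -/
/-!
Gluing at a time `τ` pairs every left-moving value `ζ a` with the right-moving value
`φ (a + π + 2 v τ)` up to a constant. Comparing the pairings at `τ₁` and `τ₂` eliminates `φ` and
shows that translating by `2 v (τ₂ - τ₁)` adds a constant `c` to `ζ`; iterating, `ζ` grows by
`n c` along the orbit, which a bounded `ζ` forbids unless `c = 0`.
-/

open Real

theorem eq_zero_of_map_add_eq_add_const_of_bounded {α β : Type*} [AddMonoid α]
    [AddCommGroup β] [LinearOrder β] [IsOrderedAddMonoid β] [Archimedean β]
    {ζ : α → β} {p : α} {c : β} (hζ : ∀ x, ζ (x + p) = ζ x + c)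
    (hbdd : ∃ M, ∀ x, |ζ x| ≤ M) : c = 0 := by
  obtain ⟨M, hM⟩ := hbdd
  have hsemiconj : Function.Semiconj ζ (· + p) (· + c) := hζ
  have hiter (n : ℕ) : ζ (n • p) = ζ 0 + n • c := by
    simpa only [add_right_iterate, zero_add] using (hsemiconj.iterate_right n).eq 0
  by_contra hc
  obtain ⟨n, hn⟩ := Archimedean.arch (2 • M + |c|) (abs_pos.mpr hc)
  have hle : n • |c| ≤ 2 • M := by
    calc n • |c| = |ζ (n • p) - ζ 0| := by rw [hiter, add_sub_cancel_left, abs_nsmul]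
      _ ≤ |ζ (n • p)| + |ζ 0| := abs_sub _ _
      _ ≤ 2 • M := by rw [two_nsmul]; exact add_le_add (hM _) (hM _)
  exact (hn.trans hle).not_gt (lt_add_of_pos_right _ (abs_pos.mpr hc))

def AntipodalGluing (ψ : ℝ → ℝ → ℝ) (τ : ℝ) : Prop :=
  ∀ θ s, ψ θ (τ + s) = ψ (θ + π) (τ - s)

theorem AntipodalGluing.exists_eq_shift_add_const {v τ : ℝ} (hv : v ≠ 0) {ζ φ : ℝ → ℝ}
    {ψ : ℝ → ℝ → ℝ} (hψ : ∀ θ t, ψ θ t = ζ (θ - v * t) + φ (θ + v * t))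
    (hglue : AntipodalGluing ψ τ) :
    ∃ k, ∀ a, ζ a = φ (a + π + 2 * v * τ) + k := by
  refine ⟨ζ (π - 2 * v * τ) - φ 0, fun a => ?_⟩
  -- `θ = a / 2` and `s` are chosen so that the arguments of `ζ` and `φ` on the left are `a` and `0`.
  set s := -(a / 2) / v - τ
  have hs : v * (τ + s) = -(a / 2) := by simp only [s]; field_simp; ring
  have h := hglue (a / 2) s
  rw [hψ, hψ] at h
  rw [show a / 2 - v * (τ + s) = a by linarith, show a / 2 + v * (τ + s) = 0 by linarith,
    show a / 2 + π - v * (τ - s) = π - 2 * v * τ by linear_combination hs,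
    show a / 2 + π + v * (τ - s) = a + π + 2 * v * τ by linear_combination -hs] at h
  linarith

/-- if a d'Alembert-form solution `ψ(θ, t) = ζ(θ − v t) + φ(θ + v t)`
satisfies the antipodal time-reversal gluing condition both at time `τ₁` and at
time `τ₂`, then for some constant `c`, `ζ(x + 2 v (τ₂ − τ₁)) = ζ(x) + c` for all
`x`; moreover if `ζ` is bounded then `c = 0`, so `ζ` is periodic with period
`2 v (τ₂ − τ₁)`. -/
theorem stmt4 (v τ₁ τ₂ : ℝ) (hv : v ≠ 0) (ζ φ : ℝ → ℝ) (ψ : ℝ → ℝ → ℝ)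
    (hψ : ∀ θ t, ψ θ t = ζ (θ - v * t) + φ (θ + v * t))
    (hglue₁ : ∀ θ s, ψ θ (τ₁ + s) = ψ (θ + π) (τ₁ - s))
    (hglue₂ : ∀ θ s, ψ θ (τ₂ + s) = ψ (θ + π) (τ₂ - s)) :
    ∃ c : ℝ, (∀ x, ζ (x + 2 * v * (τ₂ - τ₁)) = ζ x + c) ∧
      ((∃ M : ℝ, ∀ x, |ζ x| ≤ M) →
        c = 0 ∧ ∀ x, ζ (x + 2 * v * (τ₂ - τ₁)) = ζ x) := by
  obtain ⟨k₁, h₁⟩ := AntipodalGluing.exists_eq_shift_add_const hv hψ hglue₁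
  obtain ⟨k₂, h₂⟩ := AntipodalGluing.exists_eq_shift_add_const hv hψ hglue₂
  have hshift : ∀ x, ζ (x + 2 * v * (τ₂ - τ₁)) = ζ x + (k₁ - k₂) := fun x => by
    rw [h₁, h₂ x, show x + 2 * v * (τ₂ - τ₁) + π + 2 * v * τ₁ = x + π + 2 * v * τ₂ by ring]
    ring
  refine ⟨k₁ - k₂, hshift, fun hbdd => ?_⟩
  have hc := eq_zero_of_map_add_eq_add_const_of_bounded hshift hbdd
  exact ⟨hc, fun x => by rw [hshift, hc, add_zero]⟩
end

section
/- Take the profile ζ(x) = sin x and wave speed v = 1, and for τ ∈ ℝ let ψ_τ(θ, t) = sin(θ − t) + sin(θ + t − 2τ + π) be the corresponding consistent solution for a topology change at time τ. Then for τ₁, τ₂ ∈ ℝ, the initial profiles coincide — i.e. ψ_{τ₁}(θ, 0) = ψ_{τ₂}(θ, 0) for all θ ∈ ℝ — if and only if τ₁ − τ₂ is an integer multiple of π. In particular, for this profile the initial data on the surface t = 0 cannot be specified without knowing the time τ at which the antipodal identification occurs. -/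
open Real

/-! The initial profile is `sin θ + sin (θ - 2τ + π)`, so two of them agree exactly when
`2 (τ₁ - τ₂)` is a period of `sin`, and the periods of `sin` are the multiples of `2π`. -/

theorem Function.periodic_iff_forall_add_eq_add {α : Type*} [AddCommGroup α] {β : Type*}
    {f : α → β} {a b : α} : Function.Periodic f (a - b) ↔ ∀ x, f (x + a) = f (x + b) := by
  constructor
  · intro h x
    simpa [add_sub_cancel, add_assoc] using h (x + b)
  · intro h x
    simpa [sub_add_eq_add_sub, add_sub_assoc] using h (x - b)

theorem Real.periodic_sin_iff {c : ℝ} : Function.Periodic sin c ↔ ∃ k : ℤ, c = k * (2 * π) := by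
  constructor
  · intro h
    have hcos : cos c = 1 := by
      simpa [sin_add, sin_pi_div_two, cos_pi_div_two] using h (π / 2)
    obtain ⟨k, hk⟩ := (cos_eq_one_iff c).1 hcos
    exact ⟨k, hk.symm⟩
  · rintro ⟨k, rfl⟩
    exact sin_periodic.int_mul k

/-- with profile `ζ = sin` and `v = 1`, the consistent solutions
`ψ_τ(θ, t) = sin(θ − t) + sin(θ + t − 2τ + π)` for topology changes at times
`τ₁` and `τ₂` have the same initial data at `t = 0` iff `τ₁ − τ₂` is an
integer multiple of `π`. -/
theorem stmt6 (ψ : ℝ → ℝ → ℝ → ℝ)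
    (hψ : ∀ τ θ t, ψ τ θ t = sin (θ - t) + sin (θ + t - 2 * τ + π))
    (τ₁ τ₂ : ℝ) :
    (∀ θ : ℝ, ψ τ₁ θ 0 = ψ τ₂ θ 0) ↔ ∃ k : ℤ, τ₁ - τ₂ = k * π := by
  have hshift : (∀ θ : ℝ, ψ τ₁ θ 0 = ψ τ₂ θ 0) ↔
      Function.Periodic sin ((π - 2 * τ₂) - (π - 2 * τ₁)) := by
    simp only [hψ, Function.periodic_iff_forall_add_eq_add, add_zero, add_right_inj]
    refine forall_congr' fun θ => ?_
    have hregroup : ∀ τ, θ - 2 * τ + π = θ + (π - 2 * τ) := fun τ => by ring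
    rw [hregroup, hregroup, eq_comm]
  rw [hshift, periodic_sin_iff]
  refine exists_congr fun k => ?_
  constructor <;> intro h <;> linarith
end
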